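/- Let E be a field of characteristic different from 2 and let v be a henselian ℤ-valuation on E with v(2) = 0. If the residue field κ_v is separably closed, then every regular 3-dimensional quadratic form over E is isotropic. -/

import Mathlib

/-!
Conventions used throughout this file.

* `ℤ`-valuations.  We use valuations with values in the multiplicative value group
  `Zm0 := WithZero (Multiplicative ℤ)` (Mathlib's `ℤₘ₀`).  The *additive* value `n : ℤ`
  of the paper corresponds to the multiplicative value `ofAdd (-n)`, so additive value `0`
  corresponds to `(1 : Zm0)`, the valuation ring of `v` is `{x | v x ≤ 1}`, and
  additive inequalities get reversed.  A `ℤ`-valuation (a valuation with value group `ℤ`)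
  is a `v : Valuation K Zm0` that is surjective.

* The valuation ring of `v` is `v.valuationSubring`, and the residue field `κ_v` is
  `IsLocalRing.ResidueField v.valuationSubring`.
-/

open Multiplicative

local notation "Zm0" => WithZero (Multiplicative ℤ)

universe u

/-- A valuation `val` on a field `E` is *henselian* if it extends uniquely to every finite
field extension `L` of `E`.  Extensions of `val` to `L` (up to equivalence) correspond
exactly to valuation subrings of `L` whose pullback to `E` is the valuation subring of
`val`, so uniqueness of the extension is expressed by `∃!` below. -/
def IsHenselianValuation {E : Type u} [Field E] {Γ : Type*}
    [LinearOrderedCommGroupWithZero Γ] (val : Valuation E Γ) : Prop :=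
  ∀ (L : Type u) [Field L] [Algebra E L] [FiniteDimensional E L],
    ∃! O : ValuationSubring L, O.comap (algebraMap E L) = val.valuationSubring

open Polynomial in
lemma henselSquare {E : Type u} [Field E] (v : Valuation E Zm0)
    (hhens : IsHenselianValuation v) {u c : E}
    (h2c : v (2 * c) = 1) (hclose : v (u - c ^ 2) < 1) :
    ∃ s : E, s ^ 2 = u := by
  by_contra hno
  push_neg at hno
  have hne : u - c ^ 2 ≠ 0 := fun h => hno c (sub_eq_zero.mp h).symm
  have hirr : Irreducible (X ^ 2 - C u : E[X]) :=
    X_pow_sub_C_irreducible_of_prime Nat.prime_two (fun b => hno b)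
  haveI : Fact (Irreducible (X ^ 2 - C u : E[X])) := ⟨hirr⟩
  have hpne : (X ^ 2 - C u : E[X]) ≠ 0 :=
    (monic_X_pow_sub_C u (by norm_num : (2:ℕ) ≠ 0)).ne_zero
  haveI : FiniteDimensional E (AdjoinRoot (X ^ 2 - C u : E[X])) :=
    (AdjoinRoot.powerBasis hpne).finite
  obtain ⟨O, hO, huniq⟩ := hhens (AdjoinRoot (X ^ 2 - C u : E[X]))
  set L := AdjoinRoot (X ^ 2 - C u : E[X]) with hL
  set f : E →+* L := algebraMap E L with hf
  have halg : ∀ a : E, f a ∈ O ↔ v a ≤ 1 := by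
    intro a
    rw [← ValuationSubring.mem_comap, hO, Valuation.mem_valuationSubring_iff]
  set r : L := AdjoinRoot.root _ with hr
  have hroot : r ^ 2 = f u := by
    have h0 := AdjoinRoot.eval₂_root (X ^ 2 - C u : E[X])
    simp [sub_eq_zero] at h0
    rw [hf, AdjoinRoot.algebraMap_eq]; exact h0
  have haev : aeval (-r) (X ^ 2 - C u : E[X]) = 0 := by
    simp [sub_eq_zero, hroot, AdjoinRoot.algebraMap_eq]
    rfl
  set σ : L →ₐ[E] L := AdjoinRoot.liftAlgHom _ (Algebra.ofId E L) (-r) haev with hσ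
  have hOc : O.comap σ.toRingHom = O := by
    apply huniq
    rw [ValuationSubring.comap_comap]
    have : (σ.toRingHom).comp (algebraMap E L) = algebraMap E L := by
      ext a; exact σ.commutes a
    rw [this, hO]
  have hinv : ∀ z : L, σ z ∈ O ↔ z ∈ O := by
    intro z
    conv_rhs => rw [← hOc]
    exact Iff.rfl
  set c' : L := f c with hc'
  have hσr : σ r = -r := AdjoinRoot.liftAlgHom_root _ _ _ haev
  have hσc : σ c' = c' := σ.commutes c
  have hinj : Function.Injective f := f.injective
  have ht1 : r - c' ≠ 0 := by
    intro h
    apply hne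
    have : r = c' := sub_eq_zero.mp h
    have : f u = f (c ^ 2) := by rw [← hroot, this, map_pow]
    rw [sub_eq_zero]; exact hinj this
  have ht2 : r + c' ≠ 0 := by
    intro h
    apply hne
    have : r = -c' := eq_neg_of_add_eq_zero_left h
    have : f u = f (c ^ 2) := by rw [← hroot, this, map_pow]; ring
    rw [sub_eq_zero]; exact hinj this
  have hmul : (r - c') * (r + c') = f (u - c ^ 2) := by
    have : (r - c') * (r + c') = r ^ 2 - c' ^ 2 := by ring
    rw [this, hroot, map_sub, map_pow]
  -- the inverse of u - c^2 is not in O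
  have hAinv : f ((u - c ^ 2)⁻¹) ∉ O := by
    rw [halg, map_inv₀]
    intro hle
    have h0 : v (u - c ^ 2) ≠ 0 := v.ne_zero_iff.mpr hne
    have := mul_le_mul_right hle (v (u - c ^ 2))
    rw [mul_inv_cancel₀ h0, mul_one] at this
    exact absurd hclose (not_lt.mpr this)
  have hD : f ((2 * c)⁻¹) ∈ O := by
    rw [halg, map_inv₀, h2c]; norm_num
  have h2cne : (2 * c : E) ≠ 0 := by
    intro h; rw [h] at h2c; simp at h2c
  have hstep1 : (r - c')⁻¹ ∉ O ∨ (r + c')⁻¹ ∉ O := by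
    by_contra h
    push_neg at h
    have : (r - c')⁻¹ * (r + c')⁻¹ ∈ O := mul_mem h.1 h.2
    rw [← mul_inv, hmul, ← map_inv₀] at this
    exact hAinv this
  have hswap : (r - c')⁻¹ ∈ O ↔ (r + c')⁻¹ ∈ O := by
    have hσt1 : σ ((r - c')⁻¹) = -((r + c')⁻¹) := by
      rw [map_inv₀, map_sub, hσr, hσc, show -r - c' = -(r + c') by ring, inv_neg]
    constructor
    · intro h
      have := (hinv _).mpr h
      rw [hσt1] at this
      exact neg_mem_iff.mp this
    · intro h
      have h' : σ ((r - c')⁻¹) ∈ O := by rw [hσt1]; exact neg_mem h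
      exact (hinv _).mp h'
  have hboth : (r - c')⁻¹ ∉ O ∧ (r + c')⁻¹ ∉ O := by
    rcases hstep1 with h | h
    · exact ⟨h, fun h' => h (hswap.mpr h')⟩
    · exact ⟨fun h' => h (hswap.mp h'), h⟩
  have h2c' : (r + c') - (r - c') = f (2 * c) := by
    rw [map_mul]
    have : f 2 = 2 := by rw [map_ofNat]
    rw [this]; ring
  have hfne : f (2 * c) ≠ 0 := fun h => h2cne (hinj (by rw [h, map_zero]))
  rcases O.mem_or_inv_mem ((r - c') / (r + c')) with h | h
  · apply hboth.2
    have key : (r + c')⁻¹ = (1 - (r - c') / (r + c')) * f ((2 * c)⁻¹) := by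
      rw [map_inv₀, ← h2c']
      have hccne : (r + c') - (r - c') ≠ 0 := by rw [h2c']; exact hfne
      rw [one_sub_div ht2, div_mul_eq_mul_div, mul_inv_cancel₀ hccne, one_div]
    rw [key]
    exact mul_mem (sub_mem (one_mem O) h) hD
  · rw [inv_div] at h
    apply hboth.1
    have key : (r - c')⁻¹ = ((r + c') / (r - c') - 1) * f ((2 * c)⁻¹) := by
      rw [map_inv₀, ← h2c']
      have hccne : (r + c') - (r - c') ≠ 0 := by rw [h2c']; exact hfne
      rw [div_sub_one ht1, div_mul_eq_mul_div, mul_inv_cancel₀ hccne, one_div]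
    rw [key]
    exact mul_mem (sub_mem h (one_mem O)) hD


lemma val_one_of_isUnit {E : Type*} [Field E] {v : Valuation E Zm0} {x : v.valuationSubring}
    (h : IsUnit x) : v (x : E) = 1 := by
  obtain ⟨⟨a, b, hab, hba⟩, rfl⟩ := h
  have h1 : v ((a : E) * (b : E)) = 1 := by
    have : ((a * b : v.valuationSubring) : E) = (a : E) * (b : E) := rfl
    rw [← this, hab]
    simp
  rw [map_mul] at h1
  have ha : v (a : E) ≤ 1 := (Valuation.mem_valuationSubring_iff v _).mp a.2
  have hb : v (b : E) ≤ 1 := (Valuation.mem_valuationSubring_iff v _).mp b.2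
  refine le_antisymm ha ?_
  calc (1 : Zm0) = v (a : E) * v (b : E) := h1.symm
    _ ≤ v (a : E) * 1 := mul_le_mul_right hb _
    _ = v (a : E) := mul_one _

lemma isUnit_of_val_one {E : Type*} [Field E] {v : Valuation E Zm0} {x : v.valuationSubring}
    (h : v (x : E) = 1) : IsUnit x := by
  have hx0 : (x : E) ≠ 0 := by
    intro h0
    rw [h0, map_zero] at h
    exact zero_ne_one h
  have hinv : (x : E)⁻¹ ∈ v.valuationSubring := by
    rw [Valuation.mem_valuationSubring_iff, map_inv₀, h]
    norm_num
  refine ⟨⟨x, ⟨(x : E)⁻¹, hinv⟩, ?_, ?_⟩, rfl⟩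
  · exact Subtype.ext (by simp [mul_inv_cancel₀ hx0])
  · exact Subtype.ext (by simp [inv_mul_cancel₀ hx0])

lemma residue_square_approx {E : Type*} [Field E] (v : Valuation E Zm0)
    (hsep : IsSepClosed (IsLocalRing.ResidueField v.valuationSubring))
    (h2 : v 2 = 1) {w : E} (hw : v w = 1) :
    ∃ c : E, v c = 1 ∧ v (w - c ^ 2) < 1 := by
  set O := v.valuationSubring with hO
  set ρ := IsLocalRing.residue O with hρ
  have hmem : ∀ x : E, v x ≤ 1 → x ∈ O := fun x h =>
    (Valuation.mem_valuationSubring_iff v x).mpr h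
  set W : O := ⟨w, hmem w hw.le⟩ with hW
  have hWunit : IsUnit W := isUnit_of_val_one (v := v) hw
  have h2O : IsUnit (2 : O) := by
    have h2e : ((2 : O) : E) = 2 := rfl
    exact isUnit_of_val_one (v := v) (by rw [h2e, h2])
  haveI : NeZero (2 : IsLocalRing.ResidueField O) := ⟨by
    have : (2 : IsLocalRing.ResidueField O) = ρ 2 := by rw [map_ofNat]
    rw [this]
    exact (h2O.map ρ).ne_zero⟩
  obtain ⟨β, hβ⟩ := IsSepClosed.exists_pow_nat_eq (ρ W) 2
  have hρW : ρ W ≠ 0 := (hWunit.map ρ).ne_zero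
  have hβ0 : β ≠ 0 := by
    intro h0
    rw [h0] at hβ
    simp at hβ
    exact hρW hβ.symm
  obtain ⟨Cc, hCc⟩ := Ideal.Quotient.mk_surjective β
  have hCcρ : ρ Cc = β := hCc
  have hCcunit : IsUnit Cc := by
    by_contra hnu
    have : Cc ∈ IsLocalRing.maximalIdeal O := (IsLocalRing.mem_maximalIdeal _).mpr (mem_nonunits_iff.mpr hnu)
    have : ρ Cc = 0 := Ideal.Quotient.eq_zero_iff_mem.mpr this
    rw [hCcρ] at this
    exact hβ0 this
  refine ⟨(Cc : E), val_one_of_isUnit hCcunit, ?_⟩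
  have hsub : W - Cc ^ 2 ∈ IsLocalRing.maximalIdeal O := by
    rw [← Ideal.Quotient.eq_zero_iff_mem]
    show ρ (W - Cc ^ 2) = 0
    rw [map_sub, map_pow, hCcρ, hβ, sub_self]
  have hnu : ¬IsUnit (W - Cc ^ 2) := mem_nonunits_iff.mp ((IsLocalRing.mem_maximalIdeal _).mp hsub)
  have hcoe : ((W - Cc ^ 2 : O) : E) = w - (Cc : E) ^ 2 := by push_cast; rfl
  have hle : v (w - (Cc : E) ^ 2) ≤ 1 := by
    rw [← hcoe]
    exact (Valuation.mem_valuationSubring_iff v _).mp (W - Cc ^ 2).2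
  refine lt_of_le_of_ne hle ?_
  intro heq
  exact hnu (isUnit_of_val_one (v := v) (by rw [hcoe]; exact heq))


set_option linter.unusedVariables false in
/-- If `v` is a henselian `ℤ`-valuation on a field `E` of characteristic
`≠ 2` with `v 2 = 0` and separably closed residue field, then every regular (i.e. with
nondegenerate polar form) `3`-dimensional quadratic form over `E` is isotropic. -/
theorem statement1 {E : Type u} [Field E] (hchar : ringChar E ≠ 2)
    (v : Valuation E Zm0) (hZ : Function.Surjective v)
    (hhens : IsHenselianValuation v) (h2 : v 2 = 1)
    (hsep : IsSepClosed (IsLocalRing.ResidueField v.valuationSubring))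
    (Q : QuadraticForm E (Fin 3 → E)) (hQ : (QuadraticMap.polarBilin Q).Nondegenerate) :
    ∃ x : Fin 3 → E, x ≠ 0 ∧ Q x = 0 := by
  classical
  have h2ne : (2 : E) ≠ 0 := by
    intro h
    rw [h, map_zero] at h2
    exact zero_ne_one h2
  haveI : Invertible (2 : E) := invertibleOfNonzero h2ne
  have hsymm : (QuadraticMap.polarBilin Q).IsSymm := by
    rw [LinearMap.isSymm_def]
    intro x y
    simpa using QuadraticMap.polar_comm Q x y
  obtain ⟨b0, hb0⟩ := LinearMap.BilinForm.exists_orthogonal_basis hsymm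
  have hfr : Module.finrank E (Fin 3 → E) = 3 := Module.finrank_fin_fun E
  let b := b0.reindex (finCongr hfr)
  have hb : ∀ i j : Fin 3, i ≠ j → QuadraticMap.polar Q (b i) (b j) = 0 := by
    intro i j hij
    have h := LinearMap.isOrthoᵢ_def.mp hb0 ((finCongr hfr).symm i) ((finCongr hfr).symm j)
      (fun hc => hij ((finCongr hfr).symm.injective hc))
    simpa [b, Module.Basis.reindex_apply] using h
  set d : Fin 3 → E := fun i => Q (b i) with hd_def
  have hdne : ∀ i, d i ≠ 0 := by
    intro i h0
    have hz : QuadraticMap.polarBilin Q (b i) = 0 := by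
      apply b.ext
      intro j
      rw [LinearMap.zero_apply]
      by_cases hij : i = j
      · subst hij
        rw [QuadraticMap.polarBilin_apply_apply, QuadraticMap.polar_self]
        have : Q (b i) = 0 := h0
        rw [this, smul_zero]
      · rw [QuadraticMap.polarBilin_apply_apply]
        exact hb i j hij
    have := hQ.1 (b i) (fun nn => by rw [hz]; rfl)
    exact b.ne_zero i this
  have hvd : ∀ i, ∃ mm : Multiplicative ℤ, (mm : Zm0) = v (d i) :=
    fun i => WithZero.ne_zero_iff_exists.mp (v.ne_zero_iff.mpr (hdne i))
  choose mval hmval using hvd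
  set n : Fin 3 → ℤ := fun i => toAdd (mval i) with hn_def
  have hn : ∀ i, v (d i) = ((ofAdd (n i) : Multiplicative ℤ) : Zm0) := by
    intro i
    rw [← hmval i]
    simp [hn_def]
  have hpair : ∃ i j : Fin 3, i ≠ j ∧ Even (n i - n j) := by
    by_cases h01 : Even (n 0) ↔ Even (n 1)
    · exact ⟨0, 1, by decide, Int.even_sub.mpr h01⟩
    by_cases h02 : Even (n 0) ↔ Even (n 2)
    · exact ⟨0, 2, by decide, Int.even_sub.mpr h02⟩
    exact ⟨1, 2, by decide, Int.even_sub.mpr (by tauto)⟩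
  obtain ⟨i, j, hij, hev⟩ := hpair
  obtain ⟨m, hm2⟩ := hev
  obtain ⟨π, hπ⟩ := hZ ((ofAdd (-1 : ℤ) : Multiplicative ℤ) : Zm0)
  have hπ0 : π ≠ 0 := by
    intro h
    rw [h, map_zero] at hπ
    exact WithZero.zero_ne_coe hπ
  set t : E := π ^ (m : ℤ) with ht
  have htne : t ≠ 0 := zpow_ne_zero _ hπ0
  have hvt : v t = ((ofAdd (-m) : Multiplicative ℤ) : Zm0) := by
    rw [ht, map_zpow₀, hπ, ← WithZero.coe_zpow]
    congr 1
    rw [← ofAdd_zsmul]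
    congr 1
    simp
  set w : E := (-(d j)) / (d i * t ^ 2) with hwdef
  have hvw : v w = 1 := by
    rw [hwdef, map_div₀, map_mul, v.map_neg, map_pow, hn i, hn j, hvt]
    rw [← WithZero.coe_pow, ← WithZero.coe_mul, ← WithZero.coe_div, ← WithZero.coe_one]
    congr 1
    rw [div_eq_one]
    rw [pow_two, ← ofAdd_add, ← ofAdd_add]
    congr 1
    omega
  obtain ⟨c, hc1, hc2⟩ := residue_square_approx v hsep h2 hvw
  have h2c : v (2 * c) = 1 := by rw [map_mul, h2, hc1, one_mul]
  obtain ⟨s, hs⟩ := henselSquare v hhens h2c hc2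
  have hkey : (s * t) ^ 2 * d i = -(d j) := by
    rw [mul_pow, hs, hwdef]
    field_simp
    rw [mul_div_assoc, div_self (hdne i), mul_one]
  refine ⟨(s * t) • b i + b j, ?_, ?_⟩
  · intro h
    have h1 := congrArg (fun y => b.repr y j) h
    simp only [map_add, map_smul, Module.Basis.repr_self, Finsupp.coe_add, Finsupp.coe_smul,
      Pi.add_apply, Pi.smul_apply, map_zero, Finsupp.coe_zero, Pi.zero_apply] at h1
    rw [Finsupp.single_apply, Finsupp.single_apply] at h1
    simp [hij] at h1
  · rw [QuadraticMap.map_add (⇑Q), QuadraticMap.map_smul, QuadraticMap.polar_smul_left,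
      hb i j hij, smul_zero, add_zero]
    have hQbi : Q (b i) = d i := rfl
    have hQbj : Q (b j) = d j := rfl
    rw [hQbi, hQbj]
    have h3 : s * t * (s * t) * d i = (s * t) ^ 2 * d i := by ring
    rw [smul_eq_mul, h3, hkey]
    ring
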